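/- Let $v_i, v_j, \theta$ satisfy $0 < v^l_i \le v_i \le v^u_i$, $0 < v^l_j \le v_j \le v^u_j$, and $\theta^l \le \theta \le \theta^u$ with $\theta^u - \theta^l < \pi$. Set $w_i = v_i^2$, $w^R = v_i v_j \cos\theta$, $w^I = v_i v_j \sin\theta$, $\phi = (\theta^u+\theta^l)/2$, $\delta = (\theta^u-\theta^l)/2$, $v^\sigma_i = v^l_i + v^u_i$, $v^\sigma_j = v^l_j + v^u_j$. Then $v^\sigma_i v^\sigma_j (w^R\cos\phi + w^I\sin\phi) - v^l_j \cos(\delta)\, v^\sigma_j\, w_i - v^l_i \cos(\delta)\, v^\sigma_i\, \frac{(w^R)^2+(w^I)^2}{w_i} \ge v^l_i v^l_j \cos(\delta)\,(v^u_i v^u_j - v^l_i v^l_j)$. -/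

import Mathlib

/-!
After substituting the lifted variables, `w^R cos φ + w^I sin φ = v_i v_j cos (θ - φ)` and
`((w^R)² + (w^I)²) / w_i = v_j²`. Since `|θ - φ| ≤ δ < π / 2`, we have `0 < cos δ ≤ cos (θ - φ)`,
so the cut reduces to `cos δ` times a polynomial inequality in `v_i, v_j`. That inequality is the
sum of the three nonnegative products `v^l_j v^σ_j (v_i - v^l_i)(v^u_i - v_i)`,
`v^l_i v^σ_i (v_j - v^l_j)(v^u_j - v_j)` and `v^σ_i v^σ_j (v_i - v^l_i)(v_j - v^l_j)`.
-/

open Real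

lemma cos_half_width_le_cos_sub_midpoint {θ θl θu : ℝ} (hl : θl ≤ θ) (hu : θ ≤ θu)
    (hwidth : θu - θl ≤ 2 * π) :
    cos ((θu - θl) / 2) ≤ cos (θ - (θu + θl) / 2) := by
  rw [← cos_abs (θ - _)]
  exact cos_le_cos_of_nonneg_of_le_pi (abs_nonneg _) (by linarith)
    (abs_le.mpr ⟨by linarith, by linarith⟩)

lemma cos_half_width_pos {θl θu : ℝ} (hle : θl ≤ θu) (hwidth : θu - θl < π) :
    0 < cos ((θu - θl) / 2) :=
  cos_pos_of_mem_Ioo ⟨by linarith [pi_pos], by linarith⟩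

lemma mul_cos_add_mul_sin_eq_mul_cos_sub (r θ φ : ℝ) :
    r * cos θ * cos φ + r * sin θ * sin φ = r * cos (θ - φ) := by
  rw [cos_sub]; ring

lemma polar_normSq_div_sq {vi vj : ℝ} (hvi : vi ≠ 0) (θ : ℝ) :
    ((vi * vj * cos θ) ^ 2 + (vi * vj * sin θ) ^ 2) / vi ^ 2 = vj ^ 2 := by
  rw [div_eq_iff (pow_ne_zero 2 hvi)]
  linear_combination (vi * vj) ^ 2 * sin_sq_add_cos_sq θ

lemma lnc_voltage_bound {vi vj vil viu vjl vju : ℝ}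
    (hil : 0 ≤ vil) (hi : vil ≤ vi) (hiu : vi ≤ viu)
    (hjl : 0 ≤ vjl) (hj : vjl ≤ vj) (hju : vj ≤ vju) :
    vil * vjl * (viu * vju - vil * vjl) ≤
      (vil + viu) * (vjl + vju) * (vi * vj) - vjl * (vjl + vju) * vi ^ 2
        - vil * (vil + viu) * vj ^ 2 := by
  have hsi : 0 ≤ vil + viu := by linarith
  have hsj : 0 ≤ vjl + vju := by linarith
  have hi_mid : 0 ≤ vjl * (vjl + vju) * ((vi - vil) * (viu - vi)) :=
    mul_nonneg (mul_nonneg hjl hsj) (mul_nonneg (by linarith) (by linarith))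
  have hj_mid : 0 ≤ vil * (vil + viu) * ((vj - vjl) * (vju - vj)) :=
    mul_nonneg (mul_nonneg hil hsi) (mul_nonneg (by linarith) (by linarith))
  have hij : 0 ≤ (vil + viu) * (vjl + vju) * ((vi - vil) * (vj - vjl)) :=
    mul_nonneg (mul_nonneg hsi hsj) (mul_nonneg (by linarith) (by linarith))
  linarith

theorem stmt_8 (vi vj θ vil viu vjl vju θl θu : ℝ)
    (h1 : 0 < vil) (h2 : vil ≤ vi) (h3 : vi ≤ viu)
    (h4 : 0 < vjl) (h5 : vjl ≤ vj) (h6 : vj ≤ vju)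
    (h7 : θl ≤ θ) (h8 : θ ≤ θu) (h9 : θu - θl < Real.pi)
    (wi wR wI φ δ vsi vsj : ℝ)
    (hwi : wi = vi ^ 2) (hR : wR = vi * vj * Real.cos θ) (hI : wI = vi * vj * Real.sin θ)
    (hφ : φ = (θu + θl) / 2) (hδ : δ = (θu - θl) / 2)
    (hsi : vsi = vil + viu) (hsj : vsj = vjl + vju) :
    vsi * vsj * (wR * Real.cos φ + wI * Real.sin φ)
      - vjl * Real.cos δ * vsj * wi
      - vil * Real.cos δ * vsi * ((wR ^ 2 + wI ^ 2) / wi)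
    ≥ vil * vjl * Real.cos δ * (viu * vju - vil * vjl) := by
  subst hwi hR hI hφ hδ hsi hsj
  have hvi : 0 < vi := h1.trans_le h2
  have hvj : 0 < vj := h4.trans_le h5
  rw [mul_cos_add_mul_sin_eq_mul_cos_sub, polar_normSq_div_sq hvi.ne']
  have hcos := cos_half_width_le_cos_sub_midpoint h7 h8 (by linarith [pi_pos])
  have hcos_pos := cos_half_width_pos (h7.trans h8) h9
  have hpoly := lnc_voltage_bound h1.le h2 h3 h4.le h5 h6
  have hweight : 0 ≤ (vil + viu) * (vjl + vju) * (vi * vj) := by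
    have : 0 < viu := by linarith
    have : 0 < vju := by linarith
    positivity
  linarith [mul_le_mul_of_nonneg_left hcos hweight, mul_le_mul_of_nonneg_left hpoly hcos_pos.le]
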